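/- Let H_1 (r_1×n_1) and H_2 (r_2×n_2) be matrices over F_2, and suppose there exist x̄ ∈ ker(H_1) nonzero with e_α ∉ Im(H_2^T) for some α, and symmetric conditions ensuring at least one nontrivial elementary canonical logical-Z operator exists (i.e., dim ker(H_1) · (n_2 − rank(H_2)) + (r_1 − rank(H_1)) · dim ker(H_2^T) > 0 appropriately interpreted). Then the minimum over all elementary canonical logical-Z operators L of Δ_{H_X}(L) equals min(Δ_{H_1}, Δ_{H_2^T}), where Δ_{H_1}, Δ_{H_2^T} are the minimum classical energy barriers over nonzero codewords of H_1 and H_2^T respectively, and H_X = (H_1 ⊗ I_{n_2} | I_{r_1} ⊗ H_2^T). -/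

import Mathlib

/-!
An additive map of bit strings that does not increase weight and intertwines two parity check
matrices (up to a weight-nonincreasing map of syndromes) carries flip paths to flip paths without
raising their energy. Lifting `x ↦ x ⊗ e_α` this way gives `Δ_{H_X}(x ⊗ e_α, 0) ≤ Δ_{H_1}(x)`.
Conversely, `e_α ∉ Im H_2ᵀ` yields `f` with `H_2 f = 0` and `f_α = 1`; contracting the second
tensor factor against `f` kills the `H_2ᵀ`-block of `H_X` and sends `(x ⊗ e_α, 0)` back to `x`,
giving the reverse inequality. The operators `(0, e_β ⊗ b)` reduce to this case because the
hypergraph product of `H_2ᵀ, H_1ᵀ` is that of `H_1, H_2` with the tensor factors swapped. Finally,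
each classical minimum is attained at a codeword, which lifts to an elementary operator with the
same barrier.
-/

open Matrix Kronecker

/-- Hamming weight of a vector over `ZMod 2`. -/
def wt {α : Type*} [Fintype α] (v : α → ZMod 2) : ℕ :=
  (Finset.univ.filter fun i => v i ≠ 0).card

/-- Number of nonzero entries of a matrix over `ZMod 2`. -/
def mwt {α β : Type*} [Fintype α] [Fintype β] (M : Matrix α β (ZMod 2)) : ℕ :=
  (Finset.univ.filter fun p : α × β => M p.1 p.2 ≠ 0).card

/-- Energy barrier of a vector `s` w.r.t. parity check matrix `H`: the minimum over
single-bit-flip paths from `0` to `s` of the maximum energy `wt (H·v)` along the path. -/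
noncomputable def eb {α β : Type*} [Fintype α] [Fintype β] (H : Matrix α β (ZMod 2)) (s : β → ZMod 2) : ℕ :=
  sInf {B | ∃ F : ℕ, ∃ v : Fin (F + 1) → β → ZMod 2,
    v 0 = 0 ∧ v (Fin.last F) = s ∧
    (∀ i : Fin F, wt (v i.castSucc + v i.succ) ≤ 1) ∧
    ∀ i, wt (H.mulVec (v i)) ≤ B}

/-- Energy barrier of a classical code: minimum of `eb` over nonzero codewords. -/
noncomputable def codeEB {α β : Type*} [Fintype α] [Fintype β] (M : Matrix α β (ZMod 2)) : ℕ :=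
  sInf {E | ∃ c, c ≠ 0 ∧ M.mulVec c = 0 ∧ eb M c = E}

/-- The X-type parity check matrix of the hypergraph product code. -/
def HX {r1 n1 r2 n2 : ℕ} (H1 : Matrix (Fin r1) (Fin n1) (ZMod 2))
    (H2 : Matrix (Fin r2) (Fin n2) (ZMod 2)) :
    Matrix (Fin r1 × Fin n2) ((Fin n1 × Fin n2) ⊕ (Fin r1 × Fin r2)) (ZMod 2) :=
  Matrix.fromCols (H1 ⊗ₖ (1 : Matrix (Fin n2) (Fin n2) (ZMod 2)))
    ((1 : Matrix (Fin r1) (Fin r1) (ZMod 2)) ⊗ₖ H2ᵀ)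

section Weight

variable {ι κ : Type*} [Fintype ι] [Fintype κ]

lemma wt_comp_of_eq_zero_off_range (u : κ → ZMod 2) {e : ι → κ} (he : Function.Injective e)
    (hu : ∀ k, k ∉ Set.range e → u k = 0) : wt (u ∘ e) = wt u := by
  classical
  unfold wt
  rw [← Finset.card_map ⟨e, he⟩]
  congr 1
  ext k
  simp only [Finset.mem_map, Finset.mem_filter, Finset.mem_univ, true_and,
    Function.Embedding.coeFn_mk, Function.comp_apply]
  constructor
  · rintro ⟨i, hi, rfl⟩; exact hi
  · intro hk
    obtain ⟨i, rfl⟩ : k ∈ Set.range e := by_contra fun h => hk (hu k h)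
    exact ⟨i, hk, rfl⟩

lemma wt_comp_equiv (u : κ → ZMod 2) (e : ι ≃ κ) : wt (u ∘ e) = wt u :=
  wt_comp_of_eq_zero_off_range u e.injective fun k hk => absurd (e.surjective k) hk

lemma wt_contract_le {σ : Type*} [Fintype σ] (f : κ → ZMod 2) (w : σ → ZMod 2)
    {e : ι → κ → σ} (he : Function.Injective (Function.uncurry e)) :
    wt (fun i => ∑ k, f k * w (e i k)) ≤ wt w := by
  classical
  set S := Finset.univ.filter fun p : ι × κ => w (e p.1 p.2) ≠ 0
  calc wt (fun i => ∑ k, f k * w (e i k))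
      ≤ (S.image Prod.fst).card := by
        refine Finset.card_le_card fun i hi => ?_
        obtain ⟨k, -, hk⟩ := Finset.exists_ne_zero_of_sum_ne_zero (Finset.mem_filter.1 hi).2
        exact Finset.mem_image.2 ⟨(i, k), by simpa [S] using right_ne_zero_of_mul hk, rfl⟩
    _ ≤ S.card := Finset.card_image_le
    _ ≤ wt w := Finset.card_le_card_of_injOn (Function.uncurry e)
        (fun ⟨_, _⟩ hp => by simpa [S] using hp) he.injOn

lemma wt_ite_snd_eq [DecidableEq κ] (u : ι → ZMod 2) (a : κ) :
    wt (fun p : ι × κ => if p.2 = a then u p.1 else 0) = wt u := by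
  have hoff : ∀ p, p ∉ Set.range (·, a) → (if p.2 = a then u p.1 else 0) = 0 :=
    fun ⟨i, _⟩ hp => if_neg fun h => hp ⟨i, congrArg (Prod.mk i) h.symm⟩
  rw [← wt_comp_of_eq_zero_off_range _ (fun _ _ h => (Prod.mk.inj h).1) hoff]
  simp [Function.comp_def]

lemma wt_sum_elim_zero (u : ι → ZMod 2) : wt (Sum.elim u (0 : κ → ZMod 2)) = wt u :=
  (wt_comp_of_eq_zero_off_range _ Sum.inl_injective fun
    | .inl i, h => absurd ⟨i, rfl⟩ h
    | .inr _, _ => rfl).symm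

end Weight

lemma exists_mulVec_transpose_eq_zero_of_single_notMem_range {m n : Type*} [Fintype m]
    [Fintype n] [DecidableEq m] (M : Matrix m n (ZMod 2)) (a : m)
    (h : ¬ ∃ c, M *ᵥ c = Pi.single a 1) : ∃ f, Mᵀ *ᵥ f = 0 ∧ f a = 1 := by
  have hnot : Pi.single a 1 ∉ LinearMap.range M.mulVecLin := fun ⟨c, hc⟩ => h ⟨c, hc⟩
  obtain ⟨φ, hφa, hφM⟩ := Submodule.exists_dual_map_eq_bot_of_notMem hnot inferInstance
  set f := (dotProductEquiv (ZMod 2) m).symm φ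
  have hf : ∀ v, f ⬝ᵥ v = φ v := fun v =>
    LinearMap.congr_fun ((dotProductEquiv (ZMod 2) m).apply_symm_apply φ) v
  refine ⟨f, ?_, ?_⟩
  · rw [mulVec_transpose]
    refine dotProduct_eq_zero _ fun w => ?_
    rw [← dotProduct_mulVec, hf]
    exact (Submodule.eq_bot_iff _).1 hφM _ ⟨_, ⟨w, rfl⟩, rfl⟩
  · rw [← hf, dotProduct_single, mul_one] at hφa
    exact (by decide : ∀ t : ZMod 2, t ≠ 0 → t = 1) _ hφa

section EnergyBarrier

variable {α β : Type*} [Fintype α] [Fintype β]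

lemma exists_flip_path (s : β → ZMod 2) :
    ∃ F : ℕ, ∃ v : Fin (F + 1) → β → ZMod 2, v 0 = 0 ∧ v (Fin.last F) = s ∧
      ∀ i : Fin F, wt (v i.castSucc + v i.succ) ≤ 1 := by
  set e := Fintype.equivFin β
  refine ⟨Fintype.card β, fun i j => if (e j : ℕ) < i then s j else 0, ?_, ?_, fun i => ?_⟩
  · funext j; simp
  · funext j; simp [(e j).isLt]
  · refine Finset.card_le_one.2 fun a ha b hb => e.injective (Fin.ext ?_)
    have flipped : ∀ j, (if (e j : ℕ) < i then s j else 0) + (if (e j : ℕ) < i + 1 then s j else 0)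
        ≠ 0 → (e j : ℕ) = i := by
      intro j hj; by_contra hne
      by_cases hlt : (e j : ℕ) < i
      · exact hj (by rw [if_pos hlt, if_pos (by omega), CharTwo.add_self_eq_zero])
      · exact hj (by rw [if_neg hlt, if_neg (by omega), add_zero])
    simp only [Finset.mem_filter, Finset.mem_univ, true_and, Pi.add_apply, Fin.val_castSucc,
      Fin.val_succ] at ha hb
    rw [flipped a ha, flipped b hb]

lemma eb_le_of_path (H : Matrix α β (ZMod 2)) {s : β → ZMod 2} {B F : ℕ}
    (v : Fin (F + 1) → β → ZMod 2) (h0 : v 0 = 0) (hlast : v (Fin.last F) = s)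
    (hflip : ∀ i : Fin F, wt (v i.castSucc + v i.succ) ≤ 1) (henergy : ∀ i, wt (H *ᵥ v i) ≤ B) :
    eb H s ≤ B :=
  Nat.sInf_le ⟨F, v, h0, hlast, hflip, henergy⟩

lemma exists_path_eb (H : Matrix α β (ZMod 2)) (s : β → ZMod 2) :
    ∃ F : ℕ, ∃ v : Fin (F + 1) → β → ZMod 2, v 0 = 0 ∧ v (Fin.last F) = s ∧
      (∀ i : Fin F, wt (v i.castSucc + v i.succ) ≤ 1) ∧ ∀ i, wt (H *ᵥ v i) ≤ eb H s := by
  obtain ⟨F, v, h0, hlast, hflip⟩ := exists_flip_path s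
  exact Nat.sInf_mem (s := {B | ∃ F : ℕ, ∃ v : Fin (F + 1) → β → ZMod 2, v 0 = 0 ∧
    v (Fin.last F) = s ∧ (∀ i : Fin F, wt (v i.castSucc + v i.succ) ≤ 1) ∧ ∀ i, wt (H *ᵥ v i) ≤ B})
    ⟨Fintype.card α, F, v, h0, hlast, hflip, fun i => Finset.card_le_univ _⟩

theorem eb_map_le {α' β' : Type*} [Fintype α'] [Fintype β'] (H : Matrix α β (ZMod 2))
    (H' : Matrix α' β' (ZMod 2)) (φ : (β → ZMod 2) →+ (β' → ZMod 2))
    (ψ : (α → ZMod 2) → α' → ZMod 2) (hφ : ∀ v, wt (φ v) ≤ wt v) (hψ : ∀ w, wt (ψ w) ≤ wt w)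
    (hcomm : ∀ v, H' *ᵥ φ v = ψ (H *ᵥ v)) (s : β → ZMod 2) : eb H' (φ s) ≤ eb H s := by
  obtain ⟨F, v, h0, hlast, hflip, henergy⟩ := exists_path_eb H s
  refine eb_le_of_path H' (fun i => φ (v i)) (by rw [h0, map_zero]) (by rw [hlast])
    (fun i => ?_) (fun i => ?_)
  · rw [← map_add]; exact (hφ _).trans (hflip i)
  · rw [hcomm]; exact (hψ _).trans (henergy i)

lemma eb_submatrix_le {α' β' : Type*} [Fintype α'] [Fintype β'] (H : Matrix α β (ZMod 2))
    (eα : α' ≃ α) (eβ : β' ≃ β) (s : β → ZMod 2) : eb (H.submatrix eα eβ) (s ∘ eβ) ≤ eb H s :=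
  eb_map_le H _ (AddMonoidHom.mk' (· ∘ eβ) fun _ _ => rfl) (· ∘ eα)
    (fun v => (wt_comp_equiv v eβ).le) (fun w => (wt_comp_equiv w eα).le)
    (fun v => by simp [submatrix_mulVec_equiv, Function.comp_assoc]) s

lemma eb_submatrix {α' β' : Type*} [Fintype α'] [Fintype β'] (H : Matrix α β (ZMod 2))
    (eα : α' ≃ α) (eβ : β' ≃ β) (s : β → ZMod 2) : eb (H.submatrix eα eβ) (s ∘ eβ) = eb H s :=
  le_antisymm (eb_submatrix_le H eα eβ s)
    (by simpa [Function.comp_assoc] using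
      eb_submatrix_le (H.submatrix eα eβ) eα.symm eβ.symm (s ∘ eβ))

end EnergyBarrier

section HypergraphProduct

variable {r1 n1 r2 n2 : ℕ} (H1 : Matrix (Fin r1) (Fin n1) (ZMod 2))
  (H2 : Matrix (Fin r2) (Fin n2) (ZMod 2))

lemma HX_mulVec_apply (W : (Fin n1 × Fin n2) ⊕ (Fin r1 × Fin r2) → ZMod 2) (r : Fin r1)
    (γ : Fin n2) :
    (HX H1 H2 *ᵥ W) (r, γ) =
      (∑ j, H1 r j * W (Sum.inl (j, γ))) + ∑ c, H2 c γ * W (Sum.inr (r, c)) := by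
  simp [HX, mulVec, dotProduct, Fintype.sum_prod_type, Matrix.one_apply, ite_mul,
    Finset.sum_ite_eq]

lemma HX_mulVec_inl_lift (u : Fin n1 → ZMod 2) (α : Fin n2) :
    HX H1 H2 *ᵥ Sum.elim (fun p : Fin n1 × Fin n2 => if p.2 = α then u p.1 else 0) 0 =
      fun q => if q.2 = α then (H1 *ᵥ u) q.1 else 0 := by
  funext ⟨r, γ⟩
  rw [HX_mulVec_apply]
  by_cases hγ : γ = α <;> simp [hγ, mulVec, dotProduct]

lemma mulVec_contract_eq_contract_HX_mulVec {f : Fin n2 → ZMod 2} (hf : H2 *ᵥ f = 0)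
    (V : (Fin n1 × Fin n2) ⊕ (Fin r1 × Fin r2) → ZMod 2) :
    H1 *ᵥ (fun j => ∑ γ, f γ * V (Sum.inl (j, γ))) =
      fun r => ∑ γ, f γ * (HX H1 H2 *ᵥ V) (r, γ) := by
  funext r
  have hvanish : ∑ γ, f γ * ∑ c, H2 c γ * V (Sum.inr (r, c)) = 0 := by
    simp_rw [Finset.mul_sum]
    rw [Finset.sum_comm]
    refine Finset.sum_eq_zero fun c _ => ?_
    have hc : ∑ γ, H2 c γ * f γ = 0 := congrFun hf c
    simp_rw [mul_left_comm (f _), ← mul_assoc, ← Finset.sum_mul, hc, zero_mul]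
  simp_rw [HX_mulVec_apply, mul_add, Finset.sum_add_distrib, hvanish, add_zero, mulVec,
    dotProduct, Finset.mul_sum]
  rw [Finset.sum_comm]
  simp_rw [mul_left_comm]

lemma eb_HX_inl_lift_le (x : Fin n1 → ZMod 2) (α : Fin n2) :
    eb (HX H1 H2) (Sum.elim (fun p : Fin n1 × Fin n2 => if p.2 = α then x p.1 else 0) 0) ≤
      eb H1 x :=
  eb_map_le H1 (HX H1 H2)
    (AddMonoidHom.mk' (fun u => Sum.elim (fun p => if p.2 = α then u p.1 else 0) 0)
      fun u v => by ext (⟨j, γ⟩ | _) <;> simp [ite_add_ite])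
    (fun w q => if q.2 = α then w q.1 else 0)
    (fun u => by simp [wt_sum_elim_zero, wt_ite_snd_eq])
    (fun w => (wt_ite_snd_eq w α).le)
    (fun u => HX_mulVec_inl_lift H1 H2 u α) x

lemma eb_le_eb_HX_inl_lift (x : Fin n1 → ZMod 2) {α : Fin n2}
    (hα : ¬ ∃ c, H2ᵀ *ᵥ c = Pi.single α 1) :
    eb H1 x ≤
      eb (HX H1 H2) (Sum.elim (fun p : Fin n1 × Fin n2 => if p.2 = α then x p.1 else 0) 0) := by
  obtain ⟨f, hf, hfα⟩ := exists_mulVec_transpose_eq_zero_of_single_notMem_range H2ᵀ α hα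
  rw [transpose_transpose] at hf
  let contract : ((Fin n1 × Fin n2) ⊕ (Fin r1 × Fin r2) → ZMod 2) →+ (Fin n1 → ZMod 2) :=
    AddMonoidHom.mk' (fun V j => ∑ γ, f γ * V (Sum.inl (j, γ)))
      fun V W => by ext j; simp [mul_add, Finset.sum_add_distrib]
  have hx : contract (Sum.elim (fun p : Fin n1 × Fin n2 => if p.2 = α then x p.1 else 0) 0) =
      x := by
    ext j; simp [contract, hfα]
  calc eb H1 x = eb H1 (contract _) := by rw [hx]
    _ ≤ _ := eb_map_le (HX H1 H2) H1 contract (fun w r => ∑ γ, f γ * w (r, γ))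
      (fun V => wt_contract_le f V fun ⟨_, _⟩ ⟨_, _⟩ h => by simpa using h)
      (fun w => wt_contract_le f w fun ⟨_, _⟩ ⟨_, _⟩ h => by simpa using h)
      (mulVec_contract_eq_contract_HX_mulVec H1 H2 hf) _

theorem eb_HX_inl_lift (x : Fin n1 → ZMod 2) {α : Fin n2}
    (hα : ¬ ∃ c, H2ᵀ *ᵥ c = Pi.single α 1) :
    eb (HX H1 H2) (Sum.elim (fun p : Fin n1 × Fin n2 => if p.2 = α then x p.1 else 0) 0) =
      eb H1 x :=
  le_antisymm (eb_HX_inl_lift_le H1 H2 x α) (eb_le_eb_HX_inl_lift H1 H2 x hα)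

def swapTensorFactors (n1 n2 r1 r2 : ℕ) :
    (Fin n1 × Fin n2) ⊕ (Fin r1 × Fin r2) ≃ (Fin r2 × Fin r1) ⊕ (Fin n2 × Fin n1) :=
  (Equiv.sumCongr (Equiv.prodComm _ _) (Equiv.prodComm _ _)).trans (Equiv.sumComm _ _)

lemma HX_eq_submatrix_HX_transpose :
    HX H1 H2 = (HX H2ᵀ H1ᵀ).submatrix (Equiv.prodComm _ _)
      (swapTensorFactors n1 n2 r1 r2) := by
  ext ⟨r, γ⟩ (⟨j, γ'⟩ | ⟨r', c⟩) <;> simp [HX, swapTensorFactors, Matrix.one_apply, mul_comm]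

theorem eb_HX_inr_lift (b : Fin r2 → ZMod 2) {β : Fin r1}
    (hβ : ¬ ∃ c, H1 *ᵥ c = Pi.single β 1) :
    eb (HX H1 H2) (Sum.elim 0 (fun p : Fin r1 × Fin r2 => if p.1 = β then b p.2 else 0)) =
      eb H2ᵀ b := by
  rw [HX_eq_submatrix_HX_transpose, ← eb_HX_inl_lift H2ᵀ H1ᵀ b (by rwa [transpose_transpose]),
    ← eb_submatrix (HX H2ᵀ H1ᵀ) (Equiv.prodComm (Fin r1) (Fin n2))
      (swapTensorFactors n1 n2 r1 r2)]
  congr 1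
  ext (_ | _) <;> rfl

end HypergraphProduct

section CodeEnergyBarrier

variable {α β : Type*} [Fintype α] [Fintype β] {M : Matrix α β (ZMod 2)}

lemma codeEB_le_eb {c : β → ZMod 2} (hc : c ≠ 0) (hMc : M *ᵥ c = 0) : codeEB M ≤ eb M c :=
  Nat.sInf_le ⟨c, hc, hMc, rfl⟩

lemma exists_eb_eq_codeEB (h : ∃ c, c ≠ 0 ∧ M *ᵥ c = 0) :
    ∃ c, c ≠ 0 ∧ M *ᵥ c = 0 ∧ eb M c = codeEB M :=
  let ⟨c, hc, hMc⟩ := h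
  Nat.sInf_mem (s := {E | ∃ c, c ≠ 0 ∧ M *ᵥ c = 0 ∧ eb M c = E}) ⟨_, c, hc, hMc, rfl⟩

end CodeEnergyBarrier

theorem stmt19 {r1 n1 r2 n2 : ℕ}
    (H1 : Matrix (Fin r1) (Fin n1) (ZMod 2)) (H2 : Matrix (Fin r2) (Fin n2) (ZMod 2))
    (h1 : ∃ (x : Fin n1 → ZMod 2) (α : Fin n2), x ≠ 0 ∧ H1.mulVec x = 0 ∧
        ¬ ∃ c, H2ᵀ.mulVec c = Pi.single α 1)
    (h2 : ∃ (bb : Fin r2 → ZMod 2) (β : Fin r1), bb ≠ 0 ∧ H2ᵀ.mulVec bb = 0 ∧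
        ¬ ∃ c, H1.mulVec c = Pi.single β 1) :
    sInf {E | ∃ L : (Fin n1 × Fin n2) ⊕ (Fin r1 × Fin r2) → ZMod 2,
      ((∃ (x : Fin n1 → ZMod 2) (α : Fin n2), x ≠ 0 ∧ H1.mulVec x = 0 ∧
          (¬ ∃ c, H2ᵀ.mulVec c = Pi.single α 1) ∧
          L = Sum.elim (fun p : Fin n1 × Fin n2 => if p.2 = α then x p.1 else 0)
                (0 : Fin r1 × Fin r2 → ZMod 2)) ∨
       (∃ (bb : Fin r2 → ZMod 2) (β : Fin r1), bb ≠ 0 ∧ H2ᵀ.mulVec bb = 0 ∧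
          (¬ ∃ c, H1.mulVec c = Pi.single β 1) ∧
          L = Sum.elim (0 : Fin n1 × Fin n2 → ZMod 2)
                (fun p : Fin r1 × Fin r2 => if p.1 = β then bb p.2 else 0))) ∧
      eb (HX H1 H2) L = E} = min (codeEB H1) (codeEB H2ᵀ) := by
  obtain ⟨x₀, α, hx₀, hx₀ker, hα⟩ := h1
  obtain ⟨b₀, β, hb₀, hb₀ker, hβ⟩ := h2
  obtain ⟨x, hx, hxker, hxE⟩ := exists_eb_eq_codeEB ⟨x₀, hx₀, hx₀ker⟩
  obtain ⟨b, hb, hbker, hbE⟩ := exists_eb_eq_codeEB ⟨b₀, hb₀, hb₀ker⟩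
  apply le_antisymm
  · refine le_min (Nat.sInf_le ⟨_, Or.inl ⟨x, α, hx, hxker, hα, rfl⟩, ?_⟩)
      (Nat.sInf_le ⟨_, Or.inr ⟨b, β, hb, hbker, hβ, rfl⟩, ?_⟩)
    · rw [eb_HX_inl_lift H1 H2 x hα, hxE]
    · rw [eb_HX_inr_lift H1 H2 b hβ, hbE]
  refine le_csInf ⟨_, _, Or.inl ⟨x₀, α, hx₀, hx₀ker, hα, rfl⟩, rfl⟩ ?_
  rintro E ⟨L, ⟨x, α, hx, hxker, hα, rfl⟩ | ⟨b, β, hb, hbker, hβ, rfl⟩, rfl⟩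
  · rw [eb_HX_inl_lift H1 H2 x hα]
    exact (min_le_left _ _).trans (codeEB_le_eb hx hxker)
  · rw [eb_HX_inr_lift H1 H2 b hβ]
    exact (min_le_right _ _).trans (codeEB_le_eb hb hbker)
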